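/- Let 1 ≤ r ≤ n, let x₀ be a real number and δ > 0, T > 0 with δ ≤ 2T, and suppose |x₀ − λ_i| ≥ δ/2 for all 1 ≤ i ≤ r. Set x := max_{1≤i,j≤r} |u_iᵀ E u_j|. Then ∫_{−T}^{T} ‖ Σ_{1≤i,j≤r} ( (u_iᵀ E u_j) / ((x₀+it−λ_i)(x₀+it−λ_j)) ) u_i u_jᵀ ‖ dt ≤ 8 r² x / δ. -/

import Mathlib

/-!
Write `z = x₀ + it`. Each coefficient of the block is bounded by `x / (|z - λᵢ| |z - λⱼ|)`, and
the separation hypothesis gives `|z - λᵢ|² ≥ (δ/2)² + t²`, while each rank-one matrix `uᵢ uⱼᵀ`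
built from unit vectors has spectral norm `1`. Hence the integrand is at most
`r² x / ((δ/2)² + t²)`, whose integral over any interval is at most
`r² x · π / (δ/2) ≤ 8 r² x / δ`.
-/

open Matrix

noncomputable def specNorm {𝕜 : Type*} [RCLike 𝕜] {m n : ℕ}
    (M : Matrix (Fin m) (Fin n) 𝕜) : ℝ :=
  ‖LinearMap.toContinuousLinearMap (Matrix.toEuclideanLin M)‖

open scoped Matrix.Norms.L2Operator

lemma specNorm_eq_l2_opNorm {𝕜 : Type*} [RCLike 𝕜] {m n : ℕ}
    (M : Matrix (Fin m) (Fin n) 𝕜) : specNorm M = ‖M‖ := rfl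

lemma Matrix.l2_opNorm_vecMulVec_star {𝕜 m n : Type*} [RCLike 𝕜] [Fintype m] [Fintype n]
    [DecidableEq n] (x : EuclideanSpace 𝕜 m) (y : EuclideanSpace 𝕜 n) :
    ‖vecMulVec (⇑x) (star ⇑y)‖ = ‖x‖ * ‖y‖ := by
  rw [← InnerProductSpace.symm_toEuclideanLin_rankOne, l2_opNorm_def, LinearEquiv.trans_apply,
    LinearEquiv.apply_symm_apply]
  exact InnerProductSpace.norm_rankOne x y

lemma EuclideanSpace.norm_toLp_ofReal {ι : Type*} [Fintype ι] (a : ι → ℝ) :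
    ‖WithLp.toLp 2 (fun i => (a i : ℂ))‖ = √(a ⬝ᵥ a) := by
  simp [EuclideanSpace.norm_eq, dotProduct, Complex.norm_real, sq]

lemma Matrix.l2_opNorm_map_ofReal_vecMulVec {m n : Type*} [Fintype m] [Fintype n]
    [DecidableEq n] (a : m → ℝ) (b : n → ℝ) :
    ‖(vecMulVec a b).map Complex.ofReal‖ = √(a ⬝ᵥ a) * √(b ⬝ᵥ b) := by
  rw [← EuclideanSpace.norm_toLp_ofReal, ← EuclideanSpace.norm_toLp_ofReal,
    ← l2_opNorm_vecMulVec_star]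
  congr 1
  ext i j
  simp [vecMulVec_apply]

lemma Matrix.l2_opNorm_sum_smul_map_ofReal_vecMulVec_le {ι m : Type*} [Fintype m]
    [DecidableEq m] (s : Finset ι) (u : ι → m → ℝ) (hu : ∀ i ∈ s, u i ⬝ᵥ u i = 1)
    (c : ι → ι → ℂ) {K : ℝ} (hc : ∀ i ∈ s, ∀ j ∈ s, ‖c i j‖ ≤ K) :
    ‖∑ i ∈ s, ∑ j ∈ s, c i j • (vecMulVec (u i) (u j)).map Complex.ofReal‖
      ≤ (s.card : ℝ) ^ 2 * K := by
  have hterm : ∀ i ∈ s, ∀ j ∈ s,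
      ‖c i j • (vecMulVec (u i) (u j)).map Complex.ofReal‖ ≤ K := by
    intro i hi j hj
    rw [norm_smul, l2_opNorm_map_ofReal_vecMulVec, hu i hi, hu j hj]
    simpa using hc i hi j hj
  calc _ ≤ ∑ i ∈ s, ∑ j ∈ s, ‖c i j • (vecMulVec (u i) (u j)).map Complex.ofReal‖ :=
        (norm_sum_le _ _).trans (Finset.sum_le_sum fun i _ => norm_sum_le _ _)
    _ ≤ ∑ i ∈ s, ∑ j ∈ s, K :=
        Finset.sum_le_sum fun i hi => Finset.sum_le_sum (hterm i hi)
    _ = (s.card : ℝ) ^ 2 * K := by simp [sq, mul_assoc]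

lemma sqrt_sq_add_sq_le_norm_add_mul_I_sub {c x₀ l : ℝ} (t : ℝ) (hc : 0 ≤ c)
    (h : c ≤ |x₀ - l|) : √(c ^ 2 + t ^ 2) ≤ ‖(x₀ : ℂ) + t * Complex.I - l‖ := by
  have hz : (x₀ : ℂ) + t * Complex.I - l = ((x₀ - l : ℝ) : ℂ) + t * Complex.I := by
    push_cast; ring
  rw [hz, Complex.norm_add_mul_I]
  refine Real.sqrt_le_sqrt (add_le_add_left ?_ _)
  simpa [sq_abs] using pow_le_pow_left₀ hc h 2

lemma norm_div_mul_sub_le {c x₀ a b : ℝ} (q t : ℝ) (hc : 0 < c)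
    (ha : c ≤ |x₀ - a|) (hb : c ≤ |x₀ - b|) :
    ‖(q : ℂ) / (((x₀ : ℂ) + t * Complex.I - a) * ((x₀ : ℂ) + t * Complex.I - b))‖
      ≤ |q| / (c ^ 2 + t ^ 2) := by
  have hden : c ^ 2 + t ^ 2 ≤
      ‖(x₀ : ℂ) + t * Complex.I - a‖ * ‖(x₀ : ℂ) + t * Complex.I - b‖ := by
    rw [← Real.mul_self_sqrt (by positivity : 0 ≤ c ^ 2 + t ^ 2)]
    exact mul_le_mul (sqrt_sq_add_sq_le_norm_add_mul_I_sub t hc.le ha)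
      (sqrt_sq_add_sq_le_norm_add_mul_I_sub t hc.le hb) (Real.sqrt_nonneg _) (norm_nonneg _)
  rw [norm_div, norm_mul, Complex.norm_real, Real.norm_eq_abs]
  exact div_le_div_of_nonneg_left (abs_nonneg q) (by positivity) hden

lemma integral_one_div_sq_add_sq {c : ℝ} (hc : c ≠ 0) (a b : ℝ) :
    ∫ t in a..b, 1 / (c ^ 2 + t ^ 2) = (Real.arctan (b / c) - Real.arctan (a / c)) / c := by
  have h : ∀ t, 1 / (c ^ 2 + t ^ 2) = c⁻¹ ^ 2 * (1 / (1 + (t / c) ^ 2)) := by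
    intro t; field_simp
  simp_rw [h]
  rw [intervalIntegral.integral_const_mul,
    intervalIntegral.integral_comp_div (fun t => 1 / (1 + t ^ 2)) hc,
    integral_one_div_one_add_sq, smul_eq_mul]
  field_simp

lemma intervalIntegrable_one_div_sq_add_sq {c : ℝ} (hc : c ≠ 0) (a b : ℝ) :
    IntervalIntegrable (fun t : ℝ => 1 / (c ^ 2 + t ^ 2)) MeasureTheory.volume a b :=
  (continuous_const.div (by fun_prop) fun t => by positivity).intervalIntegrable a b

lemma integral_one_div_sq_add_sq_le {c : ℝ} (hc : 0 < c) (a b : ℝ) :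
    ∫ t in a..b, 1 / (c ^ 2 + t ^ 2) ≤ Real.pi / c := by
  rw [integral_one_div_sq_add_sq hc.ne']
  gcongr
  linarith [Real.arctan_lt_pi_div_two (b / c), Real.neg_pi_div_two_lt_arctan (a / c)]

lemma intervalIntegral.integral_mono_of_nonneg {f g : ℝ → ℝ} {a b : ℝ} (hab : a ≤ b)
    (hf : ∀ t, 0 ≤ f t) (hg : IntervalIntegrable g MeasureTheory.volume a b)
    (hfg : ∀ t, f t ≤ g t) : ∫ t in a..b, f t ≤ ∫ t in a..b, g t := by
  rw [intervalIntegral.integral_of_le hab, intervalIntegral.integral_of_le hab]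
  exact MeasureTheory.integral_mono_of_nonneg (.of_forall hf) hg.1 (.of_forall hfg)

theorem M1_top_block_bound_general
    {n : ℕ} (E : Matrix (Fin n) (Fin n) ℝ)
    (lam : ℕ → ℝ)
    (u : ℕ → (Fin n → ℝ))
    (hu_on : ∀ i ∈ Finset.Icc 1 n, ∀ j ∈ Finset.Icc 1 n,
      u i ⬝ᵥ u j = if i = j then 1 else 0)
    (r : ℕ) (hr1 : 1 ≤ r) (hrn : r ≤ n)
    (x₀ : ℝ) (δ T : ℝ) (hδ : 0 < δ) (hT : 0 < T)
    (hsep : ∀ i ∈ Finset.Icc 1 r, δ / 2 ≤ |x₀ - lam i|)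
    (x : ℝ)
    (hx : x = (Finset.Icc 1 r ×ˢ Finset.Icc 1 r).sup'
      (Finset.Nonempty.product (Finset.nonempty_Icc.mpr hr1)
        (Finset.nonempty_Icc.mpr hr1))
      (fun q => |u q.1 ⬝ᵥ E *ᵥ u q.2|)) :
    (∫ t in (-T)..T, specNorm
      (∑ i ∈ Finset.Icc 1 r, ∑ j ∈ Finset.Icc 1 r,
        (((u i ⬝ᵥ E *ᵥ u j : ℝ) : ℂ) /
            (((x₀ : ℂ) + t * Complex.I - (lam i : ℂ))
              * ((x₀ : ℂ) + t * Complex.I - (lam j : ℂ)))) •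
          (vecMulVec (u i) (u j)).map Complex.ofReal))
      ≤ 8 * (r : ℝ) ^ 2 * x / δ := by
  have hc : 0 < δ / 2 := by positivity
  have hunit : ∀ i ∈ Finset.Icc 1 r, u i ⬝ᵥ u i = 1 := fun i hi => by
    have hi' := Finset.Icc_subset_Icc_right hrn hi
    simpa using hu_on i hi' i hi'
  have hcoeff : ∀ i ∈ Finset.Icc 1 r, ∀ j ∈ Finset.Icc 1 r, |u i ⬝ᵥ E *ᵥ u j| ≤ x :=
    fun i hi j hj => hx ▸ Finset.le_sup' (fun q => |u q.1 ⬝ᵥ E *ᵥ u q.2|)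
      (Finset.mk_mem_product hi hj)
  have hx0 : 0 ≤ x := by
    have h1 : 1 ∈ Finset.Icc 1 r := Finset.mem_Icc.mpr ⟨le_rfl, hr1⟩
    exact (abs_nonneg _).trans (hcoeff 1 h1 1 h1)
  calc _ ≤ ∫ t in (-T)..T, (r : ℝ) ^ 2 * x * (1 / ((δ / 2) ^ 2 + t ^ 2)) := by
        refine intervalIntegral.integral_mono_of_nonneg (by linarith) (fun t => norm_nonneg _)
          ((intervalIntegrable_one_div_sq_add_sq hc.ne' _ _).const_mul _) fun t => ?_
        rw [specNorm_eq_l2_opNorm, ← mul_div_assoc, mul_one]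
        convert l2_opNorm_sum_smul_map_ofReal_vecMulVec_le _ _ hunit _ fun i hi j hj =>
          (norm_div_mul_sub_le _ t hc (hsep i hi) (hsep j hj)).trans
            (div_le_div_of_nonneg_right (hcoeff i hi j hj) (by positivity)) using 1
        simp [mul_div_assoc]
    _ = (r : ℝ) ^ 2 * x * ∫ t in (-T)..T, 1 / ((δ / 2) ^ 2 + t ^ 2) :=
        intervalIntegral.integral_const_mul _ _
    _ ≤ (r : ℝ) ^ 2 * x * (Real.pi / (δ / 2)) := by
        gcongr
        exact integral_one_div_sq_add_sq_le hc _ _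
    _ = 2 * Real.pi * ((r : ℝ) ^ 2 * x) / δ := by field_simp
    _ ≤ 8 * ((r : ℝ) ^ 2 * x) / δ := by gcongr; linarith [Real.pi_le_four]
    _ = 8 * (r : ℝ) ^ 2 * x / δ := by ring

/-- **Bound on the `(i,j ≤ r)` block of `M₁`.**  Indices are 1-based. -/
theorem M1_top_block_bound
    {n : ℕ} (A E : Matrix (Fin n) (Fin n) ℝ) (hA : A.IsSymm) (hE : E.IsSymm)
    (lam : ℕ → ℝ)
    (hlam_mono : ∀ i ∈ Finset.Icc 1 n, ∀ j ∈ Finset.Icc 1 n, i ≤ j → lam j ≤ lam i)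
    (u : ℕ → (Fin n → ℝ))
    (hu_on : ∀ i ∈ Finset.Icc 1 n, ∀ j ∈ Finset.Icc 1 n,
      u i ⬝ᵥ u j = if i = j then 1 else 0)
    (hu_eig : ∀ i ∈ Finset.Icc 1 n, A *ᵥ u i = lam i • u i)
    (r : ℕ) (hr1 : 1 ≤ r) (hrn : r ≤ n)
    (x₀ : ℝ) (δ T : ℝ) (hδ : 0 < δ) (hT : 0 < T) (hδT : δ ≤ 2 * T)
    (hsep : ∀ i ∈ Finset.Icc 1 r, δ / 2 ≤ |x₀ - lam i|)
    (x : ℝ)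
    (hx : x = (Finset.Icc 1 r ×ˢ Finset.Icc 1 r).sup'
      (Finset.Nonempty.product (Finset.nonempty_Icc.mpr hr1)
        (Finset.nonempty_Icc.mpr hr1))
      (fun q => |u q.1 ⬝ᵥ E *ᵥ u q.2|)) :
    (∫ t in (-T)..T, specNorm
      (∑ i ∈ Finset.Icc 1 r, ∑ j ∈ Finset.Icc 1 r,
        (((u i ⬝ᵥ E *ᵥ u j : ℝ) : ℂ) /
            (((x₀ : ℂ) + t * Complex.I - (lam i : ℂ))
              * ((x₀ : ℂ) + t * Complex.I - (lam j : ℂ)))) •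
          (vecMulVec (u i) (u j)).map Complex.ofReal))
      ≤ 8 * (r : ℝ) ^ 2 * x / δ :=
  M1_top_block_bound_general E lam u hu_on r hr1 hrn x₀ δ T hδ hT hsep x hx
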